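/- If G is a 4-connected graph of order n at least 8 that has no forest cut, and u is a vertex of G of degree 5, then not all neighbors of u have degree 4. -/

import Mathlib

/-- `S` is a vertex cut of `G`: some two vertices outside of `S` lie in
different connected components of `G - S`. -/
def IsVertexCut {V : Type*} (G : SimpleGraph V) (S : Set V) : Prop :=
  ∃ a b : ↥(Sᶜ), ¬ (G.induce Sᶜ).Reachable a b

/-- A forest cut is a vertex cut whose induced subgraph is a forest. -/
def IsForestCut {V : Type*} (G : SimpleGraph V) (S : Set V) : Prop :=
  IsVertexCut G S ∧ (G.induce S).IsAcyclic

/-- A graph is `k`-connected if it has more than `k` vertices and deleting any set of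
fewer than `k` vertices leaves a connected graph. -/
def KConnected {V : Type*} [Fintype V] (k : ℕ) (G : SimpleGraph V) : Prop :=
  k < Fintype.card V ∧ ∀ S : Finset V, S.card < k → (G.induce (↑S : Set V)ᶜ).Connected

/-!
Suppose every neighbour of `u` has degree `4`, and write `N = N(u)`. Vertex cuts have at least
four vertices and contain a cycle; since `n ≥ 8`, the neighbourhood of a vertex of degree at
most `6` is a vertex cut, so it contains a cycle as well.

If some `b ∈ N` has all its neighbours in `N ∪ {u}`, the cycle in `N(b) = {u, x, y, z}` forces
an edge, say `xy`. Then `xz` is not an edge (else `{u, y, z}` separates `{b, x}`), nor is `yz`;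
the fourth neighbours `s` of `x` and `t` of `y` are distinct (else `{u, z, s}` separates
`{b, x, y}`) and both lie in `N` (else `{x, t, z, u}` or `{y, s, z, u}` is a forest cut), giving
`u` six neighbours.

Otherwise each `a ∈ N` has a neighbour `w a` outside `N ∪ {u}`, hence at most two neighbours in
`N`, and the cycle in `G[N]` is an induced triangle, `4`-cycle or `5`-cycle. For a triangle
`apq`, the forest `{u, a, w p, w q}` separates `{p, q}`. Otherwise the neighbours `p, q` of `a`
on the cycle are not adjacent, and as `N(a) = {u, p, q, w a}` is not a forest, both are adjacent
to `w a`, so `w p = w a = w q`. On a `4`-cycle `apdq` the set `{u, w a, d}` separates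
`{a, p, q}`; on a `5`-cycle the same argument at `p` and `q` shows that `{u, w a}` separates it.
-/

open Finset

namespace SimpleGraph

variable {V : Type*} {G : SimpleGraph V}

def OneDegenerateOn (G : SimpleGraph V) (S : Set V) : Prop :=
  ∀ T ⊆ S, T.Nonempty → ∃ t ∈ T, (G.neighborSet t ∩ T).Subsingleton

theorem exists_nontrivial_neighborSet_inter_of_not_isAcyclic {S : Set V}
    (h : ¬ (G.induce S).IsAcyclic) :
    ∃ T ⊆ S, T.Nonempty ∧ ∀ t ∈ T, (G.neighborSet t ∩ T).Nontrivial := by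
  simp only [IsAcyclic, not_forall, not_not] at h
  obtain ⟨v, c, hc⟩ := h
  refine ⟨Subtype.val '' {x | x ∈ c.support}, by simp, ⟨v, v, c.start_mem_support, rfl⟩,
    ?_⟩
  rintro _ ⟨x, hx, rfl⟩
  obtain ⟨y, z, hyz, hN⟩ := Set.ncard_eq_two.mp (hc.ncard_neighborSet_toSubgraph_eq_two hx)
  have hmem : ∀ {y}, y ∈ c.toSubgraph.neighborSet x →
      y.1 ∈ G.neighborSet x ∩ Subtype.val '' {x | x ∈ c.support} := fun {y} hy =>
    ⟨hy.adj_sub, y, c.mem_verts_toSubgraph.mp hy.snd_mem, rfl⟩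
  exact ⟨_, hmem (by simp [hN]), _, hmem (by simp [hN]), fun h => hyz (Subtype.ext h)⟩

theorem OneDegenerateOn.isAcyclic_induce {S : Set V} (h : G.OneDegenerateOn S) :
    (G.induce S).IsAcyclic := by
  by_contra hS
  obtain ⟨T, hTS, hT, hcore⟩ := exists_nontrivial_neighborSet_inter_of_not_isAcyclic hS
  obtain ⟨t, ht, hsub⟩ := h T hTS hT
  exact (hcore t ht).not_subsingleton hsub

theorem oneDegenerateOn_singleton (x : V) : G.OneDegenerateOn {x} := by
  rintro T hT ⟨t, ht⟩
  exact ⟨t, ht, Set.subsingleton_singleton.anti (Set.inter_subset_right.trans hT)⟩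

theorem OneDegenerateOn.insert {S : Set V} {v : V} (h : G.OneDegenerateOn S)
    (hv : (G.neighborSet v ∩ S).Subsingleton) : G.OneDegenerateOn (insert v S) := by
  intro T hT hTne
  by_cases hvT : v ∈ T
  · refine ⟨v, hvT, hv.anti fun y ⟨hy, hyT⟩ => ⟨hy, ?_⟩⟩
    exact (hT hyT).resolve_left (G.ne_of_adj hy).symm
  · exact h T (fun y hy => (hT hy).resolve_left (ne_of_mem_of_not_mem hy hvT)) hTne

theorem isAcyclic_induce_four {a b c d a' b' : V} (ha : G.neighborSet a ∩ {b, c, d} ⊆ {a'})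
    (hb : G.neighborSet b ∩ {c, d} ⊆ {b'}) : (G.induce {a, b, c, d}).IsAcyclic :=
  ((((oneDegenerateOn_singleton d).insert
    (Set.subsingleton_singleton.anti Set.inter_subset_right)).insert
    (Set.subsingleton_singleton.anti hb)).insert
    (Set.subsingleton_singleton.anti ha)).isAcyclic_induce

section Finite

variable [Fintype V] [DecidableRel G.Adj]

theorem adj_iff_of_neighborFinset_eq {x y : V} {s : Finset V} (h : G.neighborFinset x = s) :
    G.Adj x y ↔ y ∈ s := by
  rw [← mem_neighborFinset, h]

theorem neighborFinset_eq_of_degree_le {v : V} {s : Finset V} (hs : s ⊆ G.neighborFinset v)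
    (hdeg : G.degree v ≤ s.card) : G.neighborFinset v = s :=
  (eq_of_subset_of_card_le hs (by rwa [card_neighborFinset_eq_degree])).symm

theorem exists_neighborFinset_eq_insert [DecidableEq V] {v : V} {s : Finset V}
    (hs : s ⊆ G.neighborFinset v) (hdeg : s.card + 1 = G.degree v) :
    ∃ d ∉ s, G.neighborFinset v = insert d s := by
  obtain ⟨d, hd, h⟩ := exists_eq_insert_iff.mpr ⟨hs, by rwa [card_neighborFinset_eq_degree]⟩
  exact ⟨d, hd, h.symm⟩

end Finite

end SimpleGraph

open SimpleGraph

section VertexCuts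

variable {V : Type*} [Fintype V] {G : SimpleGraph V}

theorem KConnected.not_isVertexCut {k : ℕ} (h : KConnected k G) {S : Finset V}
    (hS : S.card < k) : ¬ IsVertexCut G S :=
  fun ⟨a, b, hab⟩ => hab ((h.2 S hS).preconnected a b)

variable [DecidableEq V] [DecidableRel G.Adj]

theorem isVertexCut_of_neighborFinset_subset {A S : Finset V} {a : V} (ha : a ∈ A)
    (haS : a ∉ S) (hA : ∀ x ∈ A, G.neighborFinset x ⊆ A ∪ S)
    (hcard : (A ∪ S).card < Fintype.card V) : IsVertexCut G S := by
  obtain ⟨b, -, hb⟩ := exists_mem_notMem_of_card_lt_card (hcard.trans_eq card_univ.symm)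
  rw [mem_union, not_or] at hb
  refine ⟨⟨a, haS⟩, ⟨b, hb.2⟩, fun hr => hb.1 ?_⟩
  have hclosed : ∀ y : ↥(↑S : Set V)ᶜ,
      Relation.ReflTransGen (G.induce _).Adj ⟨a, haS⟩ y → y.1 ∈ A := by
    intro y hy
    induction hy with
    | refl => exact ha
    | @tail x y _ hxy hx =>
      exact (mem_union.mp (hA x hx ((mem_neighborFinset _ _ _).mpr hxy))).resolve_right y.2
  exact hclosed _ ((reachable_iff_reflTransGen _ _).mp hr)

theorem isVertexCut_neighborFinset {v : V} (hv : G.degree v + 1 < Fintype.card V) :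
    IsVertexCut G (G.neighborFinset v) :=
  isVertexCut_of_neighborFinset_subset (A := {v}) (mem_singleton_self v)
    (G.notMem_neighborFinset_self v) (by simp)
    ((card_union_le _ _).trans_lt (by simpa [add_comm] using hv))

end VertexCuts

section DegreeFiveVertex

variable {V : Type*} [Fintype V] [DecidableEq V] {G : SimpleGraph V} [DecidableRel G.Adj]

theorem exists_neighborFinset_eq_of_subset_insert (hnf : ¬ ∃ S : Set V, IsForestCut G S)
    (hn : 8 ≤ Fintype.card V) {u b : V} (hub : G.Adj u b) (hb4 : G.degree b = 4)
    (hbN : G.neighborFinset b ⊆ insert u (G.neighborFinset u)) :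
    ∃ x y z, G.neighborFinset b = {u, x, y, z} ∧ G.Adj u x ∧ G.Adj u y ∧ G.Adj u z ∧
      G.Adj x y ∧ x ≠ z ∧ y ≠ z := by
  have hbu : u ∈ G.neighborFinset b := (mem_neighborFinset _ _ _).mpr hub.symm
  obtain ⟨x, y, z, hxy, hxz, hyz, he⟩ := card_eq_three.mp
    (by rw [card_erase_of_mem hbu, card_neighborFinset_eq_degree, hb4] :
      ((G.neighborFinset b).erase u).card = 3)
  have hb : G.neighborFinset b = {u, x, y, z} := by rw [← he, insert_erase hbu]
  have huN : ∀ v ∈ ({x, y, z} : Finset V), G.Adj u v := fun v hv => by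
    rw [← he, mem_erase] at hv
    simpa [hv.1] using hbN hv.2
  by_cases hAxy : G.Adj x y
  · exact ⟨x, y, z, hb, huN x (by simp), huN y (by simp), huN z (by simp), hAxy, hxz, hyz⟩
  by_cases hAxz : G.Adj x z
  · exact ⟨x, z, y, by rw [hb, pair_comm y z], huN x (by simp), huN z (by simp),
      huN y (by simp), hAxz, hxy, hyz.symm⟩
  by_cases hAyz : G.Adj y z
  · exact ⟨y, z, x, by rw [hb, insert_comm x y, pair_comm x z], huN y (by simp),
      huN z (by simp), huN x (by simp), hAyz, hxy.symm, hxz.symm⟩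
  refine (hnf ⟨_, isVertexCut_neighborFinset (v := b) (by omega), ?_⟩).elim
  rw [hb, show (({u, x, y, z} : Finset V) : Set V) = {x, y, z, u} by ext; simp; tauto]
  refine isAcyclic_induce_four (a' := u) (b' := u) ?_ ?_
  · rintro v ⟨hv, rfl | rfl | rfl⟩
    exacts [(hAxy hv).elim, (hAxz hv).elim, rfl]
  · rintro v ⟨hv, rfl | rfl⟩
    exacts [(hAyz hv).elim, rfl]

theorem not_adj_of_neighborFinset_eq (hconn : KConnected 4 G) (hn : 8 ≤ Fintype.card V)
    {u b x y z : V} (hx : G.degree x = 4) (hb : G.neighborFinset b = {u, x, y, z})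
    (hxu : G.Adj x u) (hxy : G.Adj x y) (huy : u ≠ y) (huz : u ≠ z) (hyz : y ≠ z) :
    ¬ G.Adj x z := by
  intro hxz
  have hbN := fun v => (adj_iff_of_neighborFinset_eq hb (y := v)).mpr
  have hNx : G.neighborFinset x = {u, b, y, z} := by
    refine neighborFinset_eq_of_degree_le
      (by simp [insert_subset_iff, hxu, (hbN x (by simp)).symm, hxy, hxz]) ?_
    rw [hx, card_insert_of_notMem, card_insert_of_notMem, card_pair hyz]
    · simp [(hbN y (by simp)).ne, (hbN z (by simp)).ne]
    · simp [(hbN u (by simp)).ne', huy, huz]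
  refine hconn.not_isVertexCut (S := {u, y, z}) (card_le_three.trans_lt (by norm_num))
    (isVertexCut_of_neighborFinset_subset (A := {b, x}) (mem_insert_self _ _) ?_ ?_ ?_)
  · simp [(hbN u (by simp)).ne, (hbN y (by simp)).ne, (hbN z (by simp)).ne]
  · simp [hb, hNx, insert_subset_iff]
  · exact (card_union_le _ _).trans_lt (by grw [card_le_two, card_le_three]; omega)

theorem ne_of_neighborFinset_eq (hconn : KConnected 4 G) (hn : 8 ≤ Fintype.card V)
    {u b x y z s t : V} (hb : G.neighborFinset b = {u, x, y, z})
    (hx : G.neighborFinset x = {s, u, b, y}) (hy : G.neighborFinset y = {t, u, b, x})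
    (hsb : s ≠ b) : s ≠ t := by
  rintro rfl
  have hbN := fun v => (adj_iff_of_neighborFinset_eq hb (y := v)).mpr
  refine hconn.not_isVertexCut (S := {u, z, s}) (card_le_three.trans_lt (by norm_num))
    (isVertexCut_of_neighborFinset_subset (A := {b, x, y}) (mem_insert_self _ _) ?_ ?_ ?_)
  · simp [(hbN u (by simp)).ne, (hbN z (by simp)).ne, hsb.symm]
  · simp [hb, hx, hy, insert_subset_iff]
  · exact (card_union_le _ _).trans_lt (by grw [card_le_three, card_le_three]; omega)

theorem adj_of_neighborFinset_eq (hnf : ¬ ∃ S : Set V, IsForestCut G S)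
    (hn : 8 ≤ Fintype.card V) {u b x y z s t : V} (hb : G.neighborFinset b = {u, x, y, z})
    (hx : G.neighborFinset x = {s, u, b, y}) (hy : G.neighborFinset y = {t, u, b, x})
    (hxz : ¬ G.Adj x z) (hst : s ≠ t) (htu : t ≠ u) (htb : t ≠ b) : G.Adj u t := by
  by_contra hut
  have hbN := fun v => (adj_iff_of_neighborFinset_eq hb (y := v)).mpr
  have hyt : G.Adj y t := (adj_iff_of_neighborFinset_eq hy).mpr (by simp)
  have hcut : IsVertexCut G (({x, t, z, u} : Finset V) : Set V) := by
    refine isVertexCut_of_neighborFinset_subset (A := {b, y}) (mem_insert_self _ _) ?_ ?_ ?_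
    · simp [(hbN u (by simp)).ne, (hbN x (by simp)).ne, (hbN z (by simp)).ne, htb.symm]
    · simp [hb, hy, insert_subset_iff]
    · exact (card_union_le _ _).trans_lt (by grw [card_le_two, card_le_four]; omega)
  refine hnf ⟨_, hcut, ?_⟩
  rw [coe_insert, coe_insert, coe_pair]
  refine isAcyclic_induce_four (a' := u) (b' := z) ?_ ?_
  · rintro v ⟨hv, rfl | rfl | rfl⟩
    · rcases by simpa using (adj_iff_of_neighborFinset_eq hx).mp hv with h | h | h | h
      exacts [(hst h.symm).elim, (htu h).elim, (htb h).elim, (hyt.ne h.symm).elim]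
    · exact (hxz hv).elim
    · rfl
  · rintro v ⟨hv, rfl | rfl⟩
    · rfl
    · exact (hut hv.symm).elim

theorem false_of_neighborFinset_eq_of_adj (hconn : KConnected 4 G)
    (hnf : ¬ ∃ S : Set V, IsForestCut G S) (hn : 8 ≤ Fintype.card V) {u b x y z : V}
    (hu : G.degree u = 5) (hdeg : ∀ v ∈ G.neighborFinset u, G.degree v = 4)
    (hb : G.neighborFinset b = {u, x, y, z}) (hub : G.Adj u b) (hux : G.Adj u x)
    (huy : G.Adj u y) (huz : G.Adj u z) (hxy : G.Adj x y) (hxz : x ≠ z) (hyz : y ≠ z) :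
    False := by
  have hb' : G.neighborFinset b = {u, y, x, z} := by rw [hb, insert_comm x y]
  have hbN := fun v => (adj_iff_of_neighborFinset_eq hb (y := v)).mpr
  have hnxz := not_adj_of_neighborFinset_eq hconn hn (hdeg x (by simpa)) hb hux.symm hxy
    huy.ne huz.ne hyz
  have hnyz := not_adj_of_neighborFinset_eq hconn hn (hdeg y (by simpa)) hb' huy.symm hxy.symm
    hux.ne huz.ne hxz
  obtain ⟨s, hs, hx⟩ := exists_neighborFinset_eq_insert (G := G) (v := x) (s := {u, b, y})
    (by simp [insert_subset_iff, hux.symm, (hbN x (by simp)).symm, hxy])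
    (by rw [hdeg x (by simpa), card_insert_of_notMem (by simp [hub.ne, huy.ne]),
      card_pair (hbN y (by simp)).ne])
  obtain ⟨t, ht, hy⟩ := exists_neighborFinset_eq_insert (G := G) (v := y) (s := {u, b, x})
    (by simp [insert_subset_iff, huy.symm, (hbN y (by simp)).symm, hxy.symm])
    (by rw [hdeg y (by simpa), card_insert_of_notMem (by simp [hub.ne, hux.ne]),
      card_pair (hbN x (by simp)).ne])
  simp only [mem_insert, mem_singleton, not_or] at hs ht
  have hst := ne_of_neighborFinset_eq hconn hn hb hx hy hs.2.1
  have hut := adj_of_neighborFinset_eq hnf hn hb hx hy hnxz hst ht.1 ht.2.1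
  have hus := adj_of_neighborFinset_eq hnf hn hb' hy hx hnyz hst.symm hs.1 hs.2.1
  have hxs : G.Adj x s := (adj_iff_of_neighborFinset_eq hx).mpr (by simp)
  have hyt : G.Adj y t := (adj_iff_of_neighborFinset_eq hy).mpr (by simp)
  have hsub : ({b, x, y, z, s, t} : Finset V) ⊆ G.neighborFinset u := by
    simp [insert_subset_iff, hub, hux, huy, huz, hus, hut]
  have := card_le_card hsub
  rw [card_neighborFinset_eq_degree, hu, card_insert_of_notMem, card_insert_of_notMem,
    card_insert_of_notMem, card_insert_of_notMem, card_pair hst] at this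
  · omega
  all_goals simp only [mem_insert, mem_singleton, not_or]
  · exact ⟨fun h => hnxz (h ▸ hxs), fun h => hnyz (h ▸ hyt)⟩
  · exact ⟨hyz, Ne.symm hs.2.2, hyt.ne⟩
  · exact ⟨hxy.ne, hxz, hxs.ne, Ne.symm ht.2.2⟩
  · exact ⟨(hbN x (by simp)).ne, (hbN y (by simp)).ne, (hbN z (by simp)).ne, Ne.symm hs.2.1,
      Ne.symm ht.2.1⟩

theorem neighborFinset_eq_of_notMem_insert {u t w y z : V} (ht : G.degree t = 4)
    (htw : G.Adj t w) (hw : w ∉ insert u (G.neighborFinset u)) (htu : G.Adj t u)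
    (hty : G.Adj t y) (htz : G.Adj t z) (huy : G.Adj u y) (huz : G.Adj u z) (hyz : y ≠ z) :
    G.neighborFinset t = {w, u, y, z} := by
  simp only [mem_insert, mem_neighborFinset, not_or] at hw
  refine neighborFinset_eq_of_degree_le (by simp [insert_subset_iff, htw, htu, hty, htz]) ?_
  rw [ht, card_insert_of_notMem, card_insert_of_notMem, card_pair hyz]
  · simp [huy.ne, huz.ne]
  · simp only [mem_insert, mem_singleton, not_or]
    exact ⟨hw.1, fun h => hw.2 (h ▸ huy), fun h => hw.2 (h ▸ huz)⟩

theorem exists_neighborFinset_eq_of_mem_core {u t a : V} {w : V → V} {T : Set V}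
    (hw : ∀ v ∈ G.neighborFinset u, G.Adj v (w v) ∧ w v ∉ insert u (G.neighborFinset u))
    (hT : T ⊆ G.neighborFinset u) (hcore : ∀ t ∈ T, (G.neighborSet t ∩ T).Nontrivial)
    (ht : t ∈ T) (ht4 : G.degree t = 4) (hta : G.Adj t a) (hua : G.Adj u a) :
    ∃ b ∈ T, b ≠ a ∧ G.neighborFinset t = {w t, u, a, b} := by
  have huN : ∀ v ∈ T, G.Adj u v := fun v hv => (mem_neighborFinset _ _ _).mp (hT hv)
  obtain ⟨y, ⟨hty, hyT⟩, z, ⟨htz, hzT⟩, hyz⟩ := hcore t ht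
  have hN := neighborFinset_eq_of_notMem_insert ht4 (hw t (hT ht)).1 (hw t (hT ht)).2
    (huN t ht).symm hty htz (huN y hyT) (huN z hzT) hyz
  rcases by simpa using (adj_iff_of_neighborFinset_eq hN).mp hta with h | h | h | h
  · exact ((hw t (hT ht)).2 (by simp [← h, hua])).elim
  · exact (hua.ne h.symm).elim
  · exact ⟨z, hzT, h ▸ hyz.symm, h ▸ hN⟩
  · exact ⟨y, hyT, h ▸ hyz, by rw [hN, h, pair_comm]⟩

theorem adj_of_not_adj_of_neighborFinset_eq (hnf : ¬ ∃ S : Set V, IsForestCut G S)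
    (hn : 8 ≤ Fintype.card V) {u t w y z : V} (ht : G.neighborFinset t = {w, u, y, z})
    (hw : w ∉ insert u (G.neighborFinset u)) (hyz : ¬ G.Adj y z) : G.Adj y w := by
  by_contra hyw
  have hdeg : G.degree t + 1 < Fintype.card V := by
    rw [← card_neighborFinset_eq_degree, ht]; grw [card_le_four]; omega
  refine hnf ⟨_, isVertexCut_neighborFinset hdeg, ?_⟩
  rw [ht, show (({w, u, y, z} : Finset V) : Set V) = {y, w, z, u} by ext; simp; tauto]
  refine isAcyclic_induce_four (a' := u) (b' := z) ?_ ?_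
  · rintro v ⟨hv, rfl | rfl | rfl⟩
    exacts [(hyw hv).elim, (hyz hv).elim, rfl]
  · rintro v ⟨hv, rfl | rfl⟩
    exacts [rfl, (hw (by simp [hv.symm])).elim]

theorem eq_of_adj_of_neighborFinset_eq {u t w a b v : V}
    (ht : G.neighborFinset t = {w, u, a, b}) (ha : G.Adj u a) (hb : G.Adj u b)
    (htv : G.Adj t v) (hv : v ∉ insert u (G.neighborFinset u)) : v = w := by
  rcases by simpa using (adj_iff_of_neighborFinset_eq ht).mp htv with h | h | h | h
  · exact h
  all_goals exact (hv (by simp [h, ha, hb])).elim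

theorem false_of_triangle (hnf : ¬ ∃ S : Set V, IsForestCut G S) (hn : 8 ≤ Fintype.card V)
    {u a p q wa wp wq : V} (ha : G.neighborFinset a = {wa, u, p, q})
    (hp : G.neighborFinset p = {wp, u, a, q}) (hq : G.neighborFinset q = {wq, u, a, p})
    (hup : G.Adj u p) (huq : G.Adj u q) (hwp : wp ∉ insert u (G.neighborFinset u))
    (hwq : wq ∉ insert u (G.neighborFinset u)) : False := by
  have hpN := fun v => (adj_iff_of_neighborFinset_eq hp (y := v)).mpr
  have hcut : IsVertexCut G (({u, a, wp, wq} : Finset V) : Set V) := by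
    refine isVertexCut_of_neighborFinset_subset (A := {p, q}) (mem_insert_self _ _) ?_ ?_ ?_
    · simp only [mem_insert, mem_singleton, not_or]
      exact ⟨(hpN u (by simp)).ne, (hpN a (by simp)).ne, (hpN wp (by simp)).ne,
        fun h => hwq (by simp [← h, hup])⟩
    · simp [hp, hq, insert_subset_iff]
    · exact (card_union_le _ _).trans_lt (by grw [card_le_two, card_le_four]; omega)
  refine hnf ⟨_, hcut, ?_⟩
  rw [coe_insert, coe_insert, coe_pair]
  refine isAcyclic_induce_four (a' := a) (b' := wa) ?_ ?_
  · rintro v ⟨hv, rfl | rfl | rfl⟩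
    exacts [rfl, (hwp (mem_insert_of_mem ((mem_neighborFinset _ _ _).mpr hv))).elim,
      (hwq (mem_insert_of_mem ((mem_neighborFinset _ _ _).mpr hv))).elim]
  · rintro v ⟨hv, rfl | rfl⟩
    · exact eq_of_adj_of_neighborFinset_eq ha hup huq hv hwp
    · exact eq_of_adj_of_neighborFinset_eq ha hup huq hv hwq

theorem false_of_four_cycle (hconn : KConnected 4 G) (hn : 8 ≤ Fintype.card V)
    {u a p q d w : V} (ha : G.neighborFinset a = {w, u, p, q})
    (hp : G.neighborFinset p = {w, u, a, d}) (hq : G.neighborFinset q = {w, u, a, d}) :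
    False := by
  have hpN := fun v => (adj_iff_of_neighborFinset_eq hp (y := v)).mpr
  refine hconn.not_isVertexCut (S := {u, w, d}) (card_le_three.trans_lt (by norm_num))
    (isVertexCut_of_neighborFinset_subset (A := {p, a, q}) (mem_insert_self _ _) ?_ ?_ ?_)
  · simp [(hpN u (by simp)).ne, (hpN w (by simp)).ne, (hpN d (by simp)).ne]
  · simp [ha, hp, hq, insert_subset_iff]
  · exact (card_union_le _ _).trans_lt (by grw [card_le_three, card_le_three]; omega)

theorem false_of_five_cycle (hconn : KConnected 4 G) (hn : 8 ≤ Fintype.card V)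
    {u a p q b c w : V} (ha : G.neighborFinset a = {w, u, p, q})
    (hp : G.neighborFinset p = {w, u, a, b}) (hq : G.neighborFinset q = {w, u, a, c})
    (hb : G.neighborFinset b = {w, u, p, c}) (hc : G.neighborFinset c = {w, u, q, b}) :
    False := by
  have haN := fun v => (adj_iff_of_neighborFinset_eq ha (y := v)).mpr
  refine hconn.not_isVertexCut (S := {u, w}) (card_le_two.trans_lt (by norm_num))
    (isVertexCut_of_neighborFinset_subset (A := {a, p, q, b, c}) (mem_insert_self _ _) ?_ ?_ ?_)
  · simp [(haN u (by simp)).ne, (haN w (by simp)).ne]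
  · simp [ha, hp, hq, hb, hc, insert_subset_iff]
  · exact (card_union_le _ _).trans_lt (by grw [card_le_five, card_le_two]; omega)

theorem neighborFinset_eq_of_induced_path (hnf : ¬ ∃ S : Set V, IsForestCut G S)
    (hn : 8 ≤ Fintype.card V) {u : V} {w : V → V} {T : Set V} (hu : G.degree u = 5)
    (hdeg : ∀ v ∈ G.neighborFinset u, G.degree v = 4)
    (hw : ∀ v ∈ G.neighborFinset u, G.Adj v (w v) ∧ w v ∉ insert u (G.neighborFinset u))
    (hT : T ⊆ G.neighborFinset u) (hcore : ∀ t ∈ T, (G.neighborSet t ∩ T).Nontrivial)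
    {a p q b c : V} (ha : G.neighborFinset a = {w a, u, p, q})
    (hp : G.neighborFinset p = {w a, u, a, b}) (hq : G.neighborFinset q = {w a, u, a, c})
    (hua : G.Adj u a) (hup : G.Adj u p) (huq : G.Adj u q) (hbT : b ∈ T) (huc : G.Adj u c)
    (hpq : p ≠ q) (hApq : ¬ G.Adj p q) (hba : b ≠ a) (hca : c ≠ a) (hbc : b ≠ c) :
    G.neighborFinset b = {w a, u, p, c} := by
  have hub : G.Adj u b := (mem_neighborFinset _ _ _).mp (hT hbT)
  have hwa := (hw a ((mem_neighborFinset _ _ _).mpr hua)).2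
  have hpb : G.Adj p b := (adj_iff_of_neighborFinset_eq hp).mpr (by simp)
  have hqc : G.Adj q c := (adj_iff_of_neighborFinset_eq hq).mpr (by simp)
  have hnab : ¬ G.Adj a b := fun h => by
    rcases by simpa using (adj_iff_of_neighborFinset_eq ha).mp h with h | h | h | h
    exacts [hwa (by simp [← h, hub]), hub.ne h.symm, hpb.ne h.symm, hApq (h ▸ hpb)]
  have hbw : G.Adj b (w a) := adj_of_not_adj_of_neighborFinset_eq hnf hn
    (by rw [hp, pair_comm]) hwa (hnab ·.symm)
  obtain ⟨x, hxT, hxp, hb⟩ := exists_neighborFinset_eq_of_mem_core hw hT hcore hbT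
    (hdeg b (hT hbT)) hpb.symm hup
  have hux : G.Adj u x := (mem_neighborFinset _ _ _).mp (hT hxT)
  rw [← eq_of_adj_of_neighborFinset_eq hb hup hux hbw hwa] at hb
  have hbN := fun v => (adj_iff_of_neighborFinset_eq hb (y := v)).mpr
  have hNu : G.neighborFinset u = {a, p, q, b, c} := by
    refine neighborFinset_eq_of_degree_le
      (by simp [insert_subset_iff, hua, hup, huq, hub, huc]) ?_
    rw [hu, card_insert_of_notMem, card_insert_of_notMem, card_insert_of_notMem, card_pair hbc]
    all_goals simp only [mem_insert, mem_singleton, not_or]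
    · exact ⟨fun h => hApq (h ▸ hpb), hqc.ne⟩
    · exact ⟨hpq, hpb.ne, fun h => hApq (by rw [h]; exact hqc.symm)⟩
    · have haN := fun v => (adj_iff_of_neighborFinset_eq ha (y := v)).mpr
      exact ⟨(haN p (by simp)).ne, (haN q (by simp)).ne, hba.symm, hca.symm⟩
  rcases by simpa using (adj_iff_of_neighborFinset_eq hNu).mp hux with h | h | h | h | h
  · exact (hnab (hbN a (by simp [h])).symm).elim
  · exact (hxp h).elim
  · have hwb : b ≠ w a := fun e => hwa (by simp [← e, hub])
    exact (hbc (by simpa [hub.ne', hwb, hba] using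
      (adj_iff_of_neighborFinset_eq hq).mp (hbN q (by simp [h])).symm)).elim
  · exact ((hbN x (by simp)).ne h.symm).elim
  · rw [hb, h]

theorem false_of_induced_path (hconn : KConnected 4 G) (hnf : ¬ ∃ S : Set V, IsForestCut G S)
    (hn : 8 ≤ Fintype.card V) {u : V} {w : V → V} {T : Set V} (hu : G.degree u = 5)
    (hdeg : ∀ v ∈ G.neighborFinset u, G.degree v = 4)
    (hw : ∀ v ∈ G.neighborFinset u, G.Adj v (w v) ∧ w v ∉ insert u (G.neighborFinset u))
    (hT : T ⊆ G.neighborFinset u) (hcore : ∀ t ∈ T, (G.neighborSet t ∩ T).Nontrivial)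
    {a p q b c : V} (ha : G.neighborFinset a = {w a, u, p, q})
    (hp : G.neighborFinset p = {w p, u, a, b}) (hq : G.neighborFinset q = {w q, u, a, c})
    (hua : G.Adj u a) (hup : G.Adj u p) (huq : G.Adj u q) (hbT : b ∈ T) (hcT : c ∈ T)
    (hpq : p ≠ q) (hApq : ¬ G.Adj p q) (hba : b ≠ a) (hca : c ≠ a) : False := by
  have hub : G.Adj u b := (mem_neighborFinset _ _ _).mp (hT hbT)
  have huc : G.Adj u c := (mem_neighborFinset _ _ _).mp (hT hcT)
  have hwa := (hw a ((mem_neighborFinset _ _ _).mpr hua)).2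
  have ha' : G.neighborFinset a = {w a, u, q, p} := by rw [ha, pair_comm]
  have hpw := adj_of_not_adj_of_neighborFinset_eq hnf hn ha hwa hApq
  have hqw := adj_of_not_adj_of_neighborFinset_eq hnf hn ha' hwa (hApq ·.symm)
  rw [← eq_of_adj_of_neighborFinset_eq hp hua hub hpw hwa] at hp
  rw [← eq_of_adj_of_neighborFinset_eq hq hua huc hqw hwa] at hq
  obtain rfl | hbc := eq_or_ne b c
  · exact false_of_four_cycle hconn hn ha hp hq
  exact false_of_five_cycle hconn hn ha hp hq
    (neighborFinset_eq_of_induced_path hnf hn hu hdeg hw hT hcore ha hp hq hua hup huq hbT huc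
      hpq hApq hba hca hbc)
    (neighborFinset_eq_of_induced_path hnf hn hu hdeg hw hT hcore ha' hq hp hua huq hup hcT hub
      hpq.symm (hApq ·.symm) hca hba hbc.symm)

theorem false_of_forall_exists_adj_notMem (hconn : KConnected 4 G)
    (hnf : ¬ ∃ S : Set V, IsForestCut G S) (hn : 8 ≤ Fintype.card V) {u : V} {w : V → V}
    (hu : G.degree u = 5) (hdeg : ∀ v ∈ G.neighborFinset u, G.degree v = 4)
    (hw : ∀ v ∈ G.neighborFinset u, G.Adj v (w v) ∧ w v ∉ insert u (G.neighborFinset u)) :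
    False := by
  obtain ⟨T, hT, ⟨a, haT⟩, hcore⟩ := exists_nontrivial_neighborSet_inter_of_not_isAcyclic
    fun h => hnf ⟨_, isVertexCut_neighborFinset (v := u) (by omega), h⟩
  have huN : ∀ v ∈ T, G.Adj u v := fun v hv => (mem_neighborFinset _ _ _).mp (hT hv)
  obtain ⟨p, ⟨hap, hpT⟩, q, ⟨haq, hqT⟩, hpq⟩ := hcore a haT
  have ha := neighborFinset_eq_of_notMem_insert (hdeg a (hT haT)) (hw a (hT haT)).1
    (hw a (hT haT)).2 (huN a haT).symm hap haq (huN p hpT) (huN q hqT) hpq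
  obtain ⟨b, hbT, hba, hp⟩ := exists_neighborFinset_eq_of_mem_core hw hT hcore hpT
    (hdeg p (hT hpT)) hap.symm (huN a haT)
  obtain ⟨c, hcT, hca, hq⟩ := exists_neighborFinset_eq_of_mem_core hw hT hcore hqT
    (hdeg q (hT hqT)) haq.symm (huN a haT)
  by_cases hApq : G.Adj p q
  · have hbq : b = q := by
      rcases by simpa using (adj_iff_of_neighborFinset_eq hp).mp hApq with h | h | h | h
      exacts [((hw p (hT hpT)).2 (by simp [← h, huN q hqT])).elim,
        ((huN q hqT).ne h.symm).elim, (haq.ne h.symm).elim, h.symm]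
    have hcp : c = p := by
      rcases by simpa using (adj_iff_of_neighborFinset_eq hq).mp hApq.symm with h | h | h | h
      exacts [((hw q (hT hqT)).2 (by simp [← h, huN p hpT])).elim,
        ((huN p hpT).ne h.symm).elim, (hap.ne h.symm).elim, h.symm]
    rw [hbq] at hp
    rw [hcp] at hq
    exact false_of_triangle hnf hn ha hp hq (huN p hpT) (huN q hqT) (hw p (hT hpT)).2
      (hw q (hT hqT)).2
  · exact false_of_induced_path hconn hnf hn hu hdeg hw hT hcore ha hp hq (huN a haT)
      (huN p hpT) (huN q hqT) hbT hcT hpq hApq hba hca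

end DegreeFiveVertex

/-- In a `4`-connected graph of order at least `8` with no forest cut, no vertex of
degree `5` has all of its neighbors of degree `4`. -/
theorem degree_five_vertex_has_neighbor_of_degree_ne_four
    {V : Type*} [Fintype V] [DecidableEq V] (G : SimpleGraph V) [DecidableRel G.Adj]
    (hconn : KConnected 4 G) (hn : 8 ≤ Fintype.card V)
    (hnf : ¬ ∃ S : Set V, IsForestCut G S)
    (u : V) (hu : G.degree u = 5) :
    ∃ v ∈ G.neighborFinset u, G.degree v ≠ 4 := by
  by_contra! hdeg
  by_cases hB : ∃ b ∈ G.neighborFinset u, G.neighborFinset b ⊆ insert u (G.neighborFinset u)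
  · obtain ⟨b, hb, hbN⟩ := hB
    have hub : G.Adj u b := (mem_neighborFinset _ _ _).mp hb
    obtain ⟨x, y, z, hNb, hux, huy, huz, hxy, hxz, hyz⟩ :=
      exists_neighborFinset_eq_of_subset_insert hnf hn hub (hdeg b hb) hbN
    exact false_of_neighborFinset_eq_of_adj hconn hnf hn hu hdeg hNb hub hux huy huz hxy hxz hyz
  · push Not at hB
    choose! w hw using fun v hv => not_subset.mp (hB v hv)
    exact false_of_forall_exists_adj_notMem hconn hnf hn hu hdeg
      fun v hv => ⟨(mem_neighborFinset _ _ _).mp (hw v hv).1, (hw v hv).2⟩
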